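/- arXiv:2605.29073 — 5 statements merged into one kernel-verified Lean document; each statement's English description precedes it below -/
import Mathlib

section
/- Let τⁿ, τ : [0,T] → ℝ be nonnegative nondecreasing càdlàg functions such that τⁿ(t) → τ(t) for every t in a dense subset of [0,T] containing 0 and T, and let φⁿ, φ : [0,∞) → ℝ be continuous functions with φⁿ → φ uniformly on compact sets. Then the compositions xⁿ = φⁿ ∘ τⁿ are uniformly bounded on [0,T] (i.e. sup_{n} sup_{t∈[0,T]} |xⁿ(t)| < ∞) and xⁿ(t) → φ(τ(t)) for every continuity point t of τ and for t = T. -/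
open Filter Set Topology

/-- Convergence of time-changed paths: uniform boundedness of the compositions and
pointwise convergence at continuity points of `τ` and at `t = T`. -/
theorem stmt0
    (T : ℝ) (hT : 0 < T)
    (τn : ℕ → ℝ → ℝ) (τ : ℝ → ℝ)
    (hτn_mono : ∀ n, MonotoneOn (τn n) (Icc 0 T))
    (hτn_nonneg : ∀ n, ∀ t ∈ Icc (0:ℝ) T, 0 ≤ τn n t)
    (hτn_rc : ∀ n, ∀ t ∈ Ico (0:ℝ) T, ContinuousWithinAt (τn n) (Ici t) t)
    (hτ_mono : MonotoneOn τ (Icc 0 T))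
    (hτ_nonneg : ∀ t ∈ Icc (0:ℝ) T, 0 ≤ τ t)
    (hτ_rc : ∀ t ∈ Ico (0:ℝ) T, ContinuousWithinAt τ (Ici t) t)
    (S : Set ℝ) (hS_sub : S ⊆ Icc 0 T) (hS_dense : Icc (0:ℝ) T ⊆ closure S)
    (hS0 : (0:ℝ) ∈ S) (hST : T ∈ S)
    (hconv : ∀ t ∈ S, Tendsto (fun n => τn n t) atTop (nhds (τ t)))
    (φn : ℕ → ℝ → ℝ) (φ : ℝ → ℝ)
    (hφn_cont : ∀ n, Continuous (φn n)) (hφ_cont : Continuous φ)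
    (hφ_unif : ∀ Kc : Set ℝ, IsCompact Kc → TendstoUniformlyOn φn φ atTop Kc) :
    (∃ C : ℝ, ∀ n, ∀ t ∈ Icc (0:ℝ) T, |φn n (τn n t)| ≤ C) ∧
    (∀ t ∈ Icc (0:ℝ) T, (ContinuousWithinAt τ (Icc 0 T) t ∨ t = T) →
      Tendsto (fun n => φn n (τn n t)) atTop (nhds (φ (τ t)))) := by
  have hTmem : T ∈ Icc (0:ℝ) T := ⟨le_of_lt hT, le_refl T⟩
  obtain ⟨M, hM⟩ : ∃ M, ∀ n, τn n T ≤ M := by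
    obtain ⟨M, hM⟩ := ((hconv T hST).isBoundedUnder_le).bddAbove_range
    exact ⟨M, fun n => hM ⟨n, rfl⟩⟩
  have hτnK : ∀ n, ∀ t ∈ Icc (0:ℝ) T, τn n t ∈ Icc (0:ℝ) M := fun n t ht =>
    ⟨hτn_nonneg n t ht, le_trans (hτn_mono n ht hTmem ht.2) (hM n)⟩
  have hτTK : τ T ≤ M := le_of_tendsto (hconv T hST) (Eventually.of_forall hM)
  have hτK : ∀ t ∈ Icc (0:ℝ) T, τ t ∈ Icc (0:ℝ) M := fun t ht =>
    ⟨hτ_nonneg t ht, le_trans (hτ_mono ht hTmem ht.2) hτTK⟩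
  set K : Set ℝ := Icc (0:ℝ) M with hKdef
  have hK : IsCompact K := isCompact_Icc
  constructor
  · -- uniform boundedness
    obtain ⟨Cφ, hCφ⟩ := hK.exists_bound_of_continuousOn hφ_cont.continuousOn
    have hCn : ∀ n, ∃ C, ∀ x ∈ K, |φn n x| ≤ C := by
      intro n
      obtain ⟨C, hC⟩ := hK.exists_bound_of_continuousOn (hφn_cont n).continuousOn
      exact ⟨C, fun x hx => by simpa [Real.norm_eq_abs] using hC x hx⟩
    choose Cn hCn using hCn
    obtain ⟨N, hN⟩ : ∃ N, ∀ n ≥ N, ∀ x ∈ K, dist (φ x) (φn n x) < 1 := by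
      have := (Metric.tendstoUniformlyOn_iff.mp (hφ_unif K hK)) 1 one_pos
      exact eventually_atTop.mp this
    refine ⟨max (Cφ + 1) ((Finset.range N).fold max 0 Cn), fun n t ht => ?_⟩
    have hxK : τn n t ∈ K := hτnK n t ht
    rcases lt_or_ge n N with hn | hn
    · refine le_trans (hCn n _ hxK) (le_trans ?_ (le_max_right _ _))
      exact (Finset.le_fold_max _).mpr (Or.inr ⟨n, Finset.mem_range.mpr hn, le_refl _⟩)
    · refine le_trans ?_ (le_max_left _ _)
      have h1 := hN n hn _ hxK
      have h2 := hCφ _ hxK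
      rw [Real.norm_eq_abs] at h2
      have : |φn n (τn n t)| ≤ |φ (τn n t)| + |φ (τn n t) - φn n (τn n t)| := by
        have := abs_sub_abs_le_abs_sub (φn n (τn n t)) (φ (τn n t))
        rw [abs_sub_comm (φn n (τn n t))] at this
        linarith
      rw [Real.dist_eq] at h1
      linarith
  · -- pointwise convergence
    intro t ht hcase
    -- first: τn n t → τ t
    have hτconv : Tendsto (fun n => τn n t) atTop (nhds (τ t)) := by
      rcases hcase with hct | rfl
      · rw [Metric.tendsto_atTop]
        intro ε hε
        have hε2 : (0:ℝ) < ε / 2 := by linarith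
        obtain ⟨δ, hδ, hδc⟩ := Metric.continuousWithinAt_iff.mp hct (ε / 2) hε2
        -- find s1 ∈ S, s1 ≤ t, dist s1 t < δ
        obtain ⟨s1, hs1S, hs1le, hs1d⟩ : ∃ s1 ∈ S, s1 ≤ t ∧ dist s1 t < δ := by
          rcases lt_or_ge t δ with h | h
          · refine ⟨0, hS0, ht.1, ?_⟩
            rw [Real.dist_eq, abs_sub_comm, sub_zero, abs_of_nonneg ht.1]
            exact h
          · have hm : t - δ / 2 ∈ Icc (0:ℝ) T := ⟨by linarith, by linarith [ht.2]⟩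
            have := hS_dense hm
            rw [Metric.mem_closure_iff] at this
            obtain ⟨s1, hs1S, hs1d⟩ := this (δ / 2) (by linarith)
            have hd : |t - δ / 2 - s1| < δ / 2 := by rwa [Real.dist_eq] at hs1d
            rw [abs_lt] at hd
            refine ⟨s1, hs1S, by linarith [hd.1, hd.2], ?_⟩
            rw [Real.dist_eq, abs_lt]; constructor <;> linarith [hd.1, hd.2]
        obtain ⟨s2, hs2S, hs2ge, hs2d⟩ : ∃ s2 ∈ S, t ≤ s2 ∧ dist s2 t < δ := by
          rcases lt_or_ge T (t + δ) with h | h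
          · refine ⟨T, hST, ht.2, ?_⟩
            rw [Real.dist_eq, abs_of_nonneg (by linarith [ht.2] : (0:ℝ) ≤ T - t)]
            linarith [ht.2]
          · have hm : t + δ / 2 ∈ Icc (0:ℝ) T := ⟨by linarith [ht.1], by linarith⟩
            have := hS_dense hm
            rw [Metric.mem_closure_iff] at this
            obtain ⟨s2, hs2S, hs2d⟩ := this (δ / 2) (by linarith)
            have hd : |t + δ / 2 - s2| < δ / 2 := by rwa [Real.dist_eq] at hs2d
            rw [abs_lt] at hd
            refine ⟨s2, hs2S, by linarith [hd.1, hd.2], ?_⟩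
            rw [Real.dist_eq, abs_lt]; constructor <;> linarith [hd.1, hd.2]
        have hτs1 : |τ s1 - τ t| < ε / 2 := by
          have := hδc (hS_sub hs1S) (by rwa [Real.dist_eq] at hs1d ⊢)
          rwa [Real.dist_eq] at this
        have hτs2 : |τ s2 - τ t| < ε / 2 := by
          have := hδc (hS_sub hs2S) (by rwa [Real.dist_eq] at hs2d ⊢)
          rwa [Real.dist_eq] at this
        obtain ⟨N1, hN1⟩ := Metric.tendsto_atTop.mp (hconv s1 hs1S) (ε / 2) hε2
        obtain ⟨N2, hN2⟩ := Metric.tendsto_atTop.mp (hconv s2 hs2S) (ε / 2) hε2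
        refine ⟨max N1 N2, fun n hn => ?_⟩
        have h1 := hN1 n (le_trans (le_max_left _ _) hn)
        have h2 := hN2 n (le_trans (le_max_right _ _) hn)
        rw [Real.dist_eq, abs_lt] at h1 h2 ⊢
        have hmono1 : τn n s1 ≤ τn n t := hτn_mono n (hS_sub hs1S) ht hs1le
        have hmono2 : τn n t ≤ τn n s2 := hτn_mono n ht (hS_sub hs2S) hs2ge
        rw [abs_lt] at hτs1 hτs2
        constructor <;> nlinarith [h1.1, h1.2, h2.1, h2.2, hτs1.1, hτs1.2, hτs2.1, hτs2.2]
      · exact hconv _ hST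
    -- compose with uniform convergence
    have hτtK : τ t ∈ K := hτK t ht
    refine (hφ_unif K hK).tendsto_comp ?_ ?_
    · exact hφ_cont.continuousWithinAt
    · exact tendsto_nhdsWithin_of_tendsto_nhds_of_eventually_within _ hτconv
        (Eventually.of_forall fun n => hτnK n t ht)
end

section
/- Let τⁿ, τ ∈ D↑[0,T] with τⁿ(t) → τ(t) for all t in a dense subset of [0,T] containing 0 and T, and suppose the maximal jump of τⁿ tends to 0: sup_{t} (τⁿ(t) − τⁿ(t−)) → 0 as n → ∞. Let φⁿ → φ uniformly on compacts with φ continuous. Then for every discontinuity point t of τ, lim_{δ→0} limsup_{n→∞} d_H( φⁿ(τⁿ(B(t,δ))), φ([τ(t−), τ(t)]) ) = 0, where B(t,δ) = [t−δ, t+δ] ∩ [0,T] and d_H denotes the Hausdorff distance on compact subsets of ℝ. -/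
/-!
Let `a = τ(t-)` and `b = τ(t)`. Monotonicity and convergence at points of the dense set `S` on
both sides of `t` squeeze `τⁿ` on a small window around `t` into `[a - κ, b + κ]` for large `n`.
Conversely, between two points of `S` just left and just right of `t` the functions `τⁿ` climb
from below `a + κ` to above `b - κ`, and since they are right-continuous with jumps at most `κ`,
every level of `[a, b]` is hit up to `κ`. So `τⁿ` of the window and `[a, b]` are `κ`-close in
both directions, and the uniform continuity of `φ` together with the uniform convergence
`φⁿ → φ` on a compact set transfer this to the images.
-/

open Filter Set Topology Function

section LeftLimit

variable {α β : Type*} [LinearOrder α] [TopologicalSpace α] [OrderTopology α] [DenselyOrdered α]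
  [ConditionallyCompleteLinearOrder β] [TopologicalSpace β] [OrderTopology β]
  {f : α → β} {p x : α}

theorem MonotoneOn.tendsto_leftLim_of_Icc (hf : MonotoneOn f (Icc p x)) (hpx : p < x) :
    Tendsto f (𝓝[<] x) (𝓝 (leftLim f x)) := by
  have hbdd : BddAbove (f '' Ioo p x) :=
    ⟨f x, forall_mem_image.2 fun s hs =>
      hf (Ioo_subset_Icc_self hs) (right_mem_Icc.2 hpx.le) hs.2.le⟩
  have h := (hf.mono Ioo_subset_Icc_self).tendsto_nhdsWithin_Ioo_left (nonempty_Ioo.2 hpx) hbdd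
  have : (𝓝[<] x).NeBot := nhdsLT_neBot_of_exists_lt ⟨p, hpx⟩
  rwa [leftLim_eq_of_tendsto h]

theorem MonotoneOn.le_leftLim_of_Icc (hf : MonotoneOn f (Icc p x)) {s : α} (hs : s ∈ Ico p x) :
    f s ≤ leftLim f x :=
  have : (𝓝[<] x).NeBot := nhdsLT_neBot_of_exists_lt ⟨s, hs.2⟩
  ge_of_tendsto (hf.tendsto_leftLim_of_Icc (hs.1.trans_lt hs.2)) <| by
    filter_upwards [Ioo_mem_nhdsLT hs.2] with y hy
    exact hf (Ico_subset_Icc_self hs) ⟨hs.1.trans hy.1.le, hy.2.le⟩ hy.1.le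

theorem MonotoneOn.leftLim_le_of_Icc (hf : MonotoneOn f (Icc p x)) (hpx : p < x) :
    leftLim f x ≤ f x :=
  have : (𝓝[<] x).NeBot := nhdsLT_neBot_of_exists_lt ⟨p, hpx⟩
  le_of_tendsto (hf.tendsto_leftLim_of_Icc hpx) <| by
    filter_upwards [Ioo_mem_nhdsLT hpx] with y hy
    exact hf (Ioo_subset_Icc_self hy) (right_mem_Icc.2 hpx.le) hy.2.le

end LeftLimit

section IntermediateValue

variable {g : ℝ → ℝ} {s₁ s₂ η x : ℝ}

/-- Discrete intermediate value property: the first time `g` reaches the level `x` it overshoots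
by at most the size of the jump there. -/
theorem MonotoneOn.exists_le_le_add_of_jump_le (hg : MonotoneOn g (Icc s₁ s₂))
    (hrc : ∀ u ∈ Ico s₁ s₂, ContinuousWithinAt g (Ici u) u)
    (hjump : ∀ u ∈ Ioc s₁ s₂, g u - leftLim g u ≤ η) (h12 : s₁ ≤ s₂)
    (hx : x ∈ Icc (g s₁ - η) (g s₂)) : ∃ s ∈ Icc s₁ s₂, x ≤ g s ∧ g s ≤ x + η := by
  set A := {s ∈ Icc s₁ s₂ | x ≤ g s}
  have hs₂A : s₂ ∈ A := ⟨right_mem_Icc.2 h12, hx.2⟩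
  have hbdd : BddBelow A := ⟨s₁, fun s hs => hs.1.1⟩
  set w := sInf A
  have hw : w ∈ Icc s₁ s₂ := ⟨le_csInf ⟨s₂, hs₂A⟩ fun s hs => hs.1.1, csInf_le hbdd hs₂A⟩
  have below : ∀ s ∈ Ico s₁ w, g s < x := fun s hs => not_le.1 fun h =>
    (csInf_le hbdd ⟨⟨hs.1, hs.2.le.trans hw.2⟩, h⟩).not_gt hs.2
  have above : ∀ s ∈ Ioc w s₂, x ≤ g s := fun s hs => by
    obtain ⟨u, hu, hus⟩ := exists_lt_of_csInf_lt ⟨s₂, hs₂A⟩ hs.1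
    exact hu.2.trans (hg hu.1 ⟨hu.1.1.trans hus.le, hs.2⟩ hus.le)
  have hxw : x ≤ g w := by
    rcases hw.2.eq_or_lt with h | h
    · exact h ▸ hx.2
    · refine ge_of_tendsto (((hrc w ⟨hw.1, h⟩).mono Ioi_subset_Ici_self).tendsto) ?_
      filter_upwards [Ioo_mem_nhdsGT h] with s hs using above s ⟨hs.1, hs.2.le⟩
  refine ⟨w, hw, hxw, ?_⟩
  rcases hw.1.eq_or_lt with h | h
  · rw [← h]
    linarith [hx.1]
  · have hlim : leftLim g w ≤ x :=
      le_of_tendsto ((hg.mono (Icc_subset_Icc_right hw.2)).tendsto_leftLim_of_Icc h) <| by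
        filter_upwards [Ioo_mem_nhdsLT h] with s hs using (below s ⟨hs.1.le, hs.2⟩).le
    linarith [hjump w ⟨h, hw.2⟩]

theorem MonotoneOn.exists_abs_sub_le_of_jump_le (hg : MonotoneOn g (Icc s₁ s₂))
    (hrc : ∀ u ∈ Ico s₁ s₂, ContinuousWithinAt g (Ici u) u)
    (hjump : ∀ u ∈ Ioc s₁ s₂, g u - leftLim g u ≤ η) (h12 : s₁ ≤ s₂)
    (hx : x ∈ Icc (g s₁ - η) (g s₂ + η)) : ∃ s ∈ Icc s₁ s₂, |g s - x| ≤ η := by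
  rcases le_or_gt x (g s₂) with h | h
  · obtain ⟨s, hs, hxs, hsx⟩ := hg.exists_le_le_add_of_jump_le hrc hjump h12 ⟨hx.1, h⟩
    exact ⟨s, hs, abs_sub_le_iff.2 ⟨by linarith, by linarith⟩⟩
  · exact ⟨s₂, right_mem_Icc.2 h12, abs_sub_le_iff.2 ⟨by linarith [hx.2], by linarith [hx.2]⟩⟩

end IntermediateValue

theorem exists_mem_Icc_abs_sub_le {a b κ y : ℝ} (hab : a ≤ b) (hκ : 0 ≤ κ)
    (hy : y ∈ Icc (a - κ) (b + κ)) : ∃ x ∈ Icc a b, |y - x| ≤ κ := by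
  rcases lt_or_ge y a with hya | hay
  · exact ⟨a, left_mem_Icc.2 hab, abs_sub_le_iff.2 ⟨by linarith, by linarith [hy.1]⟩⟩
  rcases le_or_gt y b with hyb | hby
  · exact ⟨y, ⟨hay, hyb⟩, by rwa [sub_self, abs_zero]⟩
  · exact ⟨b, right_mem_Icc.2 hab, abs_sub_le_iff.2 ⟨by linarith [hy.2], by linarith⟩⟩

theorem Metric.hausdorffDist_image_le_of_forall_dist_lt {α β : Type*} [PseudoMetricSpace α]
    [PseudoMetricSpace β] {K A B : Set α} {f g : α → β} {η ε r : ℝ} (hε : 0 ≤ ε) (hr : 0 ≤ r)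
    (hA : A ⊆ K) (hB : B ⊆ K) (hfg : ∀ x ∈ K, dist (f x) (g x) < ε)
    (hg : ∀ x ∈ K, ∀ y ∈ K, dist x y < η → dist (g x) (g y) < r)
    (hAB : ∀ x ∈ A, ∃ y ∈ B, dist x y < η) (hBA : ∀ y ∈ B, ∃ x ∈ A, dist x y < η) :
    hausdorffDist (f '' A) (g '' B) ≤ ε + r := by
  refine hausdorffDist_le_of_mem_dist (add_nonneg hε hr) ?_ ?_
  · rintro _ ⟨x, hx, rfl⟩
    obtain ⟨y, hy, hxy⟩ := hAB x hx
    refine ⟨g y, mem_image_of_mem g hy, ?_⟩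
    calc dist (f x) (g y) ≤ dist (f x) (g x) + dist (g x) (g y) := dist_triangle _ _ _
      _ ≤ ε + r := add_le_add (hfg x (hA hx)).le (hg x (hA hx) y (hB hy) hxy).le
  · rintro _ ⟨y, hy, rfl⟩
    obtain ⟨x, hx, hxy⟩ := hBA y hy
    refine ⟨f x, mem_image_of_mem f hx, ?_⟩
    calc dist (g y) (f x) ≤ dist (g x) (g y) + dist (f x) (g x) := by
          rw [dist_comm (g x), dist_comm (f x)]; exact dist_triangle _ _ _
      _ ≤ r + ε := add_le_add (hg x (hA hx) y (hB hy) hxy).le (hfg x (hA hx)).le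
      _ = ε + r := add_comm r ε

theorem hausdorffDist_comp_image_le {α : Type*} {W : Set α} {f : α → ℝ} {ψ φ : ℝ → ℝ}
    {K : Set ℝ} {a b κ η ε r : ℝ} (hab : a ≤ b) (hκ : 0 ≤ κ) (hκη : κ < η) (hε : 0 ≤ ε)
    (hr : 0 ≤ r) (hK : Icc (a - κ) (b + κ) ⊆ K) (hψ : ∀ x ∈ K, dist (ψ x) (φ x) < ε)
    (hφ : ∀ x ∈ K, ∀ y ∈ K, dist x y < η → dist (φ x) (φ y) < r)
    (hmaps : MapsTo f W (Icc (a - κ) (b + κ)))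
    (hcover : ∀ x ∈ Icc a b, ∃ s ∈ W, |f s - x| ≤ κ) :
    Metric.hausdorffDist ((fun s => ψ (f s)) '' W) (φ '' Icc a b) ≤ ε + r := by
  rw [← image_image ψ f]
  refine Metric.hausdorffDist_image_le_of_forall_dist_lt hε hr
    ((image_subset_iff.2 hmaps).trans hK) ((Icc_subset_Icc (by linarith) (by linarith)).trans hK)
    hψ hφ ?_ fun x hx => ?_
  · rintro _ ⟨s, hs, rfl⟩
    obtain ⟨x, hx, hsx⟩ := exists_mem_Icc_abs_sub_le hab hκ (hmaps hs)
    exact ⟨x, hx, (Real.dist_eq _ _).trans_lt (hsx.trans_lt hκη)⟩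
  · obtain ⟨s, hs, hsx⟩ := hcover x hx
    exact ⟨f s, mem_image_of_mem f hs, (Real.dist_eq _ _).trans_lt (hsx.trans_lt hκη)⟩

section Density

variable {S : Set ℝ} {u v : ℝ}

theorem exists_mem_Ioo_sub_of_Icc_subset_closure (hS : Icc u v ⊆ closure S) {p r : ℝ}
    (hp : p ∈ Ioc u v) (hr : 0 < r) : ∃ s ∈ S, s ∈ Ioo (p - r) p := by
  have hq : max (p - r / 2) ((u + p) / 2) ∈ Ioo (p - r) p :=
    ⟨lt_max_of_lt_left (by linarith), max_lt (by linarith) (by linarith [hp.1])⟩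
  have hqI : max (p - r / 2) ((u + p) / 2) ∈ Icc u v :=
    ⟨le_max_of_le_right (by linarith [hp.1]), hq.2.le.trans hp.2⟩
  obtain ⟨s, hs, hsS⟩ := mem_closure_iff.1 (hS hqI) _ isOpen_Ioo hq
  exact ⟨s, hsS, hs⟩

theorem exists_mem_Ico_add_of_Icc_subset_closure (hS : Icc u v ⊆ closure S) (hv : v ∈ S)
    {p r : ℝ} (hp : p ∈ Icc u v) (hr : 0 < r) : ∃ s ∈ S, s ∈ Ico p (p + r) := by
  rcases hp.2.eq_or_lt with rfl | hpv
  · exact ⟨p, hv, left_mem_Ico.2 (by linarith)⟩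
  have hq : min (p + r / 2) v ∈ Ioo p (p + r) :=
    ⟨lt_min (by linarith) hpv, min_lt_of_left_lt (by linarith)⟩
  have hqI : min (p + r / 2) v ∈ Icc u v := ⟨hp.1.trans hq.1.le, min_le_right _ _⟩
  obtain ⟨s, hs, hsS⟩ := mem_closure_iff.1 (hS hqI) _ isOpen_Ioo hq
  exact ⟨s, hsS, Ioo_subset_Ico_self hs⟩

end Density

section Window

variable {T t : ℝ} {τn : ℕ → ℝ → ℝ} {τ : ℝ → ℝ} {S : Set ℝ}

theorem exists_forall_leftLim_sub_lt
    (hτn_mono : ∀ n, MonotoneOn (τn n) (Icc 0 T)) (hτ_mono : MonotoneOn τ (Icc 0 T))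
    (hS_sub : S ⊆ Icc 0 T) (hS_dense : Icc (0:ℝ) T ⊆ closure S)
    (hconv : ∀ t ∈ S, Tendsto (fun n => τn n t) atTop (𝓝 (τ t)))
    (ht : t ∈ Ioc 0 T) {κ : ℝ} (hκ : 0 < κ) :
    ∃ δ > 0, ∀ᶠ n in atTop, ∀ s ∈ Icc (t - δ) T, leftLim τ t - κ < τn n s := by
  obtain ⟨ρ, hρ, hρτ⟩ := Metric.tendsto_nhdsWithin_nhds.1
    ((hτ_mono.mono (Icc_subset_Icc_right ht.2)).tendsto_leftLim_of_Icc ht.1) (κ / 2) (half_pos hκ)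
  obtain ⟨s₃, hs₃S, hs₃⟩ := exists_mem_Ioo_sub_of_Icc_subset_closure hS_dense ht hρ
  refine ⟨t - s₃, by linarith [hs₃.2], ?_⟩
  filter_upwards [Metric.tendsto_nhds.1 (hconv s₃ hs₃S) (κ / 2) (half_pos hκ)] with n hn s hs
  have hτs₃ : dist (τ s₃) (leftLim τ t) < κ / 2 :=
    hρτ hs₃.2 (by rw [Real.dist_eq, abs_sub_lt_iff]; constructor <;> linarith [hs₃.1, hs₃.2])
  have hmono : τn n s₃ ≤ τn n s :=
    hτn_mono n (hS_sub hs₃S) ⟨(hS_sub hs₃S).1.trans (by linarith [hs.1]), hs.2⟩ (by linarith [hs.1])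
  rw [Real.dist_eq, abs_sub_lt_iff] at hn hτs₃
  linarith [hn.2, hτs₃.2]

theorem exists_forall_lt_add
    (hτn_mono : ∀ n, MonotoneOn (τn n) (Icc 0 T))
    (hτ_rc : ∀ t ∈ Ico (0:ℝ) T, ContinuousWithinAt τ (Ici t) t)
    (hS_sub : S ⊆ Icc 0 T) (hS_dense : Icc (0:ℝ) T ⊆ closure S) (hST : T ∈ S)
    (hconv : ∀ t ∈ S, Tendsto (fun n => τn n t) atTop (𝓝 (τ t)))
    (ht : t ∈ Icc 0 T) {κ : ℝ} (hκ : 0 < κ) :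
    ∃ δ > 0, ∀ᶠ n in atTop, ∀ s ∈ Icc 0 T, s ≤ t + δ → τn n s < τ t + κ := by
  have hcont : ContinuousWithinAt τ (Icc t T) t := by
    rcases ht.2.eq_or_lt with rfl | htT
    · simpa only [Icc_self] using continuousWithinAt_singleton
    · exact (hτ_rc t ⟨ht.1, htT⟩).mono Icc_subset_Ici_self
  obtain ⟨ρ, hρ, hρτ⟩ := Metric.continuousWithinAt_iff.1 hcont (κ / 2) (half_pos hκ)
  have hp : min (t + ρ / 2) T ∈ Icc 0 T :=
    ⟨le_min (by linarith [ht.1]) (ht.1.trans ht.2), min_le_right _ _⟩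
  obtain ⟨s₄, hs₄S, hs₄⟩ :=
    exists_mem_Ico_add_of_Icc_subset_closure hS_dense hST hp (half_pos hρ)
  have hts₄ : t ≤ s₄ := (le_min (by linarith) ht.2).trans hs₄.1
  refine ⟨ρ / 2, half_pos hρ, ?_⟩
  filter_upwards [Metric.tendsto_nhds.1 (hconv s₄ hs₄S) (κ / 2) (half_pos hκ)] with n hn s hs hst
  have hτs₄ : dist (τ s₄) (τ t) < κ / 2 :=
    hρτ ⟨hts₄, (hS_sub hs₄S).2⟩ (by
      rw [Real.dist_eq, abs_sub_lt_iff]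
      constructor <;> linarith [hs₄.2, min_le_left (t + ρ / 2) T])
  have hmono : τn n s ≤ τn n s₄ := hτn_mono n hs (hS_sub hs₄S) ((le_min hst hs.2).trans hs₄.1)
  rw [Real.dist_eq, abs_sub_lt_iff] at hn hτs₄
  linarith [hn.1, hτs₄.1]

theorem eventually_forall_exists_abs_sub_le
    (hτn_mono : ∀ n, MonotoneOn (τn n) (Icc 0 T))
    (hτn_rc : ∀ n, ∀ t ∈ Ico (0:ℝ) T, ContinuousWithinAt (τn n) (Ici t) t)
    (hτ_mono : MonotoneOn τ (Icc 0 T))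
    (hS_sub : S ⊆ Icc 0 T) (hS_dense : Icc (0:ℝ) T ⊆ closure S) (hST : T ∈ S)
    (hconv : ∀ t ∈ S, Tendsto (fun n => τn n t) atTop (𝓝 (τ t)))
    (hjump : ∀ ε > (0:ℝ), ∀ᶠ n in atTop, ∀ t ∈ Ioc (0:ℝ) T,
      τn n t - leftLim (τn n) t ≤ ε)
    (ht : t ∈ Ioc 0 T) {δ κ : ℝ} (hδ : 0 < δ) (hκ : 0 < κ) :
    ∀ᶠ n in atTop, ∀ x ∈ Icc (leftLim τ t) (τ t),
      ∃ s ∈ Icc (t - δ) (t + δ) ∩ Icc 0 T, |τn n s - x| ≤ κ := by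
  obtain ⟨s₁, hs₁S, hs₁⟩ := exists_mem_Ioo_sub_of_Icc_subset_closure hS_dense ht hδ
  obtain ⟨s₂, hs₂S, hs₂⟩ :=
    exists_mem_Ico_add_of_Icc_subset_closure hS_dense hST ⟨ht.1.le, ht.2⟩ hδ
  have hsub : Icc s₁ s₂ ⊆ Icc 0 T := Icc_subset_Icc (hS_sub hs₁S).1 (hS_sub hs₂S).2
  have hτs₁ : τ s₁ ≤ leftLim τ t :=
    (hτ_mono.mono (Icc_subset_Icc_right ht.2)).le_leftLim_of_Icc ⟨(hS_sub hs₁S).1, hs₁.2⟩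
  have hτs₂ : τ t ≤ τ s₂ := hτ_mono ⟨ht.1.le, ht.2⟩ (hS_sub hs₂S) hs₂.1
  filter_upwards [hjump κ hκ, Metric.tendsto_nhds.1 (hconv s₁ hs₁S) κ hκ,
    Metric.tendsto_nhds.1 (hconv s₂ hs₂S) κ hκ] with n hn hn₁ hn₂ x hx
  rw [Real.dist_eq, abs_sub_lt_iff] at hn₁ hn₂
  obtain ⟨s, hs, hsx⟩ := ((hτn_mono n).mono hsub).exists_abs_sub_le_of_jump_le (x := x)
    (fun u hu => hτn_rc n u ⟨(hS_sub hs₁S).1.trans hu.1, hu.2.trans_le (hS_sub hs₂S).2⟩)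
    (fun u hu => hn u ⟨(hS_sub hs₁S).1.trans_lt hu.1, (hsub (Ioc_subset_Icc_self hu)).2⟩)
    (hs₁.2.le.trans hs₂.1) ⟨by linarith [hx.1], by linarith [hx.2]⟩
  exact ⟨s, ⟨⟨by linarith [hs₁.1, hs.1], by linarith [hs₂.2, hs.2]⟩, hsub hs⟩, hsx⟩

theorem exists_eventually_mapsTo_Icc_and_cover
    (hτn_mono : ∀ n, MonotoneOn (τn n) (Icc 0 T))
    (hτn_rc : ∀ n, ∀ t ∈ Ico (0:ℝ) T, ContinuousWithinAt (τn n) (Ici t) t)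
    (hτ_mono : MonotoneOn τ (Icc 0 T))
    (hτ_rc : ∀ t ∈ Ico (0:ℝ) T, ContinuousWithinAt τ (Ici t) t)
    (hS_sub : S ⊆ Icc 0 T) (hS_dense : Icc (0:ℝ) T ⊆ closure S) (hST : T ∈ S)
    (hconv : ∀ t ∈ S, Tendsto (fun n => τn n t) atTop (𝓝 (τ t)))
    (hjump : ∀ ε > (0:ℝ), ∀ᶠ n in atTop, ∀ t ∈ Ioc (0:ℝ) T,
      τn n t - leftLim (τn n) t ≤ ε)
    (ht : t ∈ Ioc 0 T) {κ : ℝ} (hκ : 0 < κ) :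
    ∃ δ > 0, ∀ᶠ n in atTop,
      MapsTo (τn n) (Icc (t - δ) (t + δ) ∩ Icc 0 T) (Icc (leftLim τ t - κ) (τ t + κ)) ∧
      ∀ x ∈ Icc (leftLim τ t) (τ t), ∃ s ∈ Icc (t - δ) (t + δ) ∩ Icc 0 T, |τn n s - x| ≤ κ := by
  obtain ⟨δ₁, hδ₁, hlow⟩ :=
    exists_forall_leftLim_sub_lt hτn_mono hτ_mono hS_sub hS_dense hconv ht hκ
  obtain ⟨δ₂, hδ₂, hup⟩ :=
    exists_forall_lt_add hτn_mono hτ_rc hS_sub hS_dense hST hconv ⟨ht.1.le, ht.2⟩ hκ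
  have hδ : 0 < min δ₁ δ₂ := lt_min hδ₁ hδ₂
  refine ⟨min δ₁ δ₂, hδ, ?_⟩
  filter_upwards [hlow, hup, eventually_forall_exists_abs_sub_le hτn_mono hτn_rc hτ_mono hS_sub
    hS_dense hST hconv hjump ht hδ hκ] with n hn_low hn_up hn_cover
  refine ⟨fun s hs => ⟨?_, ?_⟩, hn_cover⟩
  · exact (hn_low s ⟨by linarith [hs.1.1, min_le_left δ₁ δ₂], hs.2.2⟩).le
  · exact (hn_up s hs.2 (by linarith [hs.1.2, min_le_right δ₁ δ₂])).le

end Window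

theorem stmt1_general
    (T : ℝ)
    (τn : ℕ → ℝ → ℝ) (τ : ℝ → ℝ)
    (hτn_mono : ∀ n, MonotoneOn (τn n) (Icc 0 T))
    (hτn_rc : ∀ n, ∀ t ∈ Ico (0:ℝ) T, ContinuousWithinAt (τn n) (Ici t) t)
    (hτ_mono : MonotoneOn τ (Icc 0 T))
    (hτ_rc : ∀ t ∈ Ico (0:ℝ) T, ContinuousWithinAt τ (Ici t) t)
    (S : Set ℝ) (hS_sub : S ⊆ Icc 0 T) (hS_dense : Icc (0:ℝ) T ⊆ closure S)
    (hST : T ∈ S)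
    (hconv : ∀ t ∈ S, Tendsto (fun n => τn n t) atTop (nhds (τ t)))
    (hjump : ∀ ε > (0:ℝ), ∀ᶠ n in atTop, ∀ t ∈ Ioc (0:ℝ) T,
      τn n t - Function.leftLim (τn n) t ≤ ε)
    (φn : ℕ → ℝ → ℝ) (φ : ℝ → ℝ)
    (hφ_cont : Continuous φ)
    (hφ_unif : ∀ Kc : Set ℝ, IsCompact Kc → TendstoUniformlyOn φn φ atTop Kc) :
    ∀ t ∈ Ioc (0:ℝ) T, Function.leftLim τ t ≠ τ t →
      ∀ ε > (0:ℝ), ∃ δ > (0:ℝ), ∀ᶠ n in atTop,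
        Metric.hausdorffDist ((fun s => φn n (τn n s)) '' (Icc (t - δ) (t + δ) ∩ Icc 0 T))
          (φ '' Icc (Function.leftLim τ t) (τ t)) < ε := by
  intro t ht _ ε hε
  have hab : leftLim τ t ≤ τ t := (hτ_mono.mono (Icc_subset_Icc_right ht.2)).leftLim_le_of_Icc ht.1
  set K := Icc (leftLim τ t - 1) (τ t + 1)
  obtain ⟨η, hη, hφη⟩ := Metric.uniformContinuousOn_iff.1
    (isCompact_Icc.uniformContinuousOn_of_continuous (s := K) hφ_cont.continuousOn) (ε / 4)
    (by positivity)
  set κ := min (η / 2) 1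
  have hκ : 0 < κ := lt_min (half_pos hη) one_pos
  have hκη : κ < η := (min_le_left _ _).trans_lt (half_lt_self hη)
  have hK : Icc (leftLim τ t - κ) (τ t + κ) ⊆ K :=
    Icc_subset_Icc (by linarith [min_le_right (η / 2) 1]) (by linarith [min_le_right (η / 2) 1])
  obtain ⟨δ, hδ, hwindow⟩ := exists_eventually_mapsTo_Icc_and_cover hτn_mono hτn_rc hτ_mono hτ_rc
    hS_sub hS_dense hST hconv hjump ht hκ
  refine ⟨δ, hδ, ?_⟩
  filter_upwards [hwindow, Metric.tendstoUniformlyOn_iff.1 (hφ_unif K isCompact_Icc) (ε / 4)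
    (by positivity)] with n ⟨hmaps, hcover⟩ hn_unif
  calc _ ≤ ε / 4 + ε / 4 := hausdorffDist_comp_image_le hab hκ.le hκη (by positivity)
          (by positivity) hK (fun x hx => (dist_comm _ _).trans_lt (hn_unif x hx)) hφη hmaps hcover
    _ < ε := by linarith

/-- Limiting jump range: for a discontinuity point `t` of `τ`, the images of small
windows around `t` under the compositions converge in Hausdorff distance to
`φ([τ(t-), τ(t)])`. -/
theorem stmt1
    (T : ℝ) (hT : 0 < T)
    (τn : ℕ → ℝ → ℝ) (τ : ℝ → ℝ)
    (hτn_mono : ∀ n, MonotoneOn (τn n) (Icc 0 T))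
    (hτn_nonneg : ∀ n, ∀ t ∈ Icc (0:ℝ) T, 0 ≤ τn n t)
    (hτn_rc : ∀ n, ∀ t ∈ Ico (0:ℝ) T, ContinuousWithinAt (τn n) (Ici t) t)
    (hτ_mono : MonotoneOn τ (Icc 0 T))
    (hτ_nonneg : ∀ t ∈ Icc (0:ℝ) T, 0 ≤ τ t)
    (hτ_rc : ∀ t ∈ Ico (0:ℝ) T, ContinuousWithinAt τ (Ici t) t)
    (S : Set ℝ) (hS_sub : S ⊆ Icc 0 T) (hS_dense : Icc (0:ℝ) T ⊆ closure S)
    (hS0 : (0:ℝ) ∈ S) (hST : T ∈ S)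
    (hconv : ∀ t ∈ S, Tendsto (fun n => τn n t) atTop (nhds (τ t)))
    (hjump : ∀ ε > (0:ℝ), ∀ᶠ n in atTop, ∀ t ∈ Ioc (0:ℝ) T,
      τn n t - Function.leftLim (τn n) t ≤ ε)
    (φn : ℕ → ℝ → ℝ) (φ : ℝ → ℝ)
    (hφn_cont : ∀ n, Continuous (φn n)) (hφ_cont : Continuous φ)
    (hφ_unif : ∀ Kc : Set ℝ, IsCompact Kc → TendstoUniformlyOn φn φ atTop Kc) :
    ∀ t ∈ Ioc (0:ℝ) T, Function.leftLim τ t ≠ τ t →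
      ∀ ε > (0:ℝ), ∃ δ > (0:ℝ), ∀ᶠ n in atTop,
        Metric.hausdorffDist ((fun s => φn n (τn n s)) '' (Icc (t - δ) (t + δ) ∩ Icc 0 T))
          (φ '' Icc (Function.leftLim τ t) (τ t)) < ε :=
  stmt1_general T τn τ hτn_mono hτn_rc hτ_mono hτ_rc S hS_sub hS_dense hST hconv hjump φn φ hφ_cont
    hφ_unif
end

section
/- Let τⁿ, τ ∈ D↑[0,T] with τⁿ → τ in the sense of pointwise convergence on a dense subset of [0,T] containing 0 and T, with sup_t Δτⁿ(t) → 0, and let φⁿ → φ uniformly on compacts, φ continuous. Define xⁿ = φⁿ ∘ τⁿ and the running infimum functions φ̲ⁿ(s) = inf_{r ∈ [τⁿ(0), τⁿ(0) ∨ s]} φⁿ(r) and φ̲(s) = inf_{r ∈ [τ(0), τ(0) ∨ s]} φ(r). Then sup_{t∈[0,T]} | inf_{s≤t} xⁿ(s) − φ̲ⁿ(τⁿ(t)) | → 0, φ̲ⁿ → φ̲ uniformly on compacts, and in particular the running infimum t ↦ inf_{s≤t} xⁿ(s) converges to φ̲ ∘ τ pointwise at every continuity point of τ and at t = T. -/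
open Filter Set Topology

/-!
Once the jumps of `τⁿ` are below `δ`, the path `τⁿ` passes within `δ` of every level between
`τⁿ(0)` and `τⁿ(t)`, so `τⁿ([0,t])` is `δ`-dense in `[τⁿ(0), τⁿ(t)]`; since the `φⁿ` are
eventually uniformly equicontinuous on compacts, the infimum of `φⁿ` over `τⁿ([0,t])` is then
close to its infimum over the whole interval. The infimum of a function over an interval moves
little when the endpoints and the function move little, which gives the uniform convergence of
`φ̲ⁿ` to the continuous `φ̲`. At a continuity point `t` of `τ`, monotonicity squeezes `τⁿ(t)`
between values at nearby points of the dense set, so `τⁿ(t) → τ(t)` and hence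
`φ̲ⁿ(τⁿ(t)) → φ̲(τ(t))`.
-/

lemma csInf_image_le_csInf_image_add {α : Type*} {f g : α → ℝ} {A B : Set α} {ε : ℝ}
    (hf : BddBelow (f '' A)) (hB : B.Nonempty) (h : ∀ y ∈ B, ∃ x ∈ A, f x ≤ g y + ε) :
    sInf (f '' A) ≤ sInf (g '' B) + ε := by
  suffices sInf (f '' A) - ε ≤ sInf (g '' B) by linarith
  refine le_csInf (hB.image g) ?_
  rintro _ ⟨y, hy, rfl⟩
  obtain ⟨x, hx, hxy⟩ := h y hy
  linarith [csInf_le hf (mem_image_of_mem f hx)]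

lemma exists_mem_Icc_abs_sub_lt {a b a' b' δ y : ℝ} (hab : a ≤ b) (ha : |a - a'| < δ)
    (hb : |b - b'| < δ) (hy : y ∈ Icc a' b') : ∃ x ∈ Icc a b, |x - y| < δ := by
  refine ⟨max a (min y b), ⟨le_max_left _ _, max_le hab (min_le_right _ _)⟩, ?_⟩
  rw [abs_lt] at ha hb ⊢
  obtain ⟨hy₁, hy₂⟩ := hy
  constructor
  · cases max_choice a (min y b) <;> cases min_choice y b <;> simp_all <;> linarith
  · cases max_choice a (min y b) <;> cases min_choice y b <;> simp_all <;> linarith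

lemma abs_sInf_image_Icc_sub_sInf_image_Icc_le {f g : ℝ → ℝ} {a b a' b' δ ε : ℝ}
    (hab : a ≤ b) (hab' : a' ≤ b') (hf : ContinuousOn f (Icc a b))
    (hg : ContinuousOn g (Icc a' b')) (ha : |a - a'| < δ) (hb : |b - b'| < δ)
    (hfg : ∀ x ∈ Icc a b, ∀ y ∈ Icc a' b', |x - y| < δ → |f x - g y| ≤ ε) :
    |sInf (f '' Icc a b) - sInf (g '' Icc a' b')| ≤ ε := by
  have hfg' : ∀ y ∈ Icc a' b', ∃ x ∈ Icc a b, f x ≤ g y + ε := fun y hy => by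
    obtain ⟨x, hx, hxy⟩ := exists_mem_Icc_abs_sub_lt hab ha hb hy
    exact ⟨x, hx, by linarith [(abs_le.1 (hfg x hx y hy hxy)).2]⟩
  have hgf : ∀ x ∈ Icc a b, ∃ y ∈ Icc a' b', g y ≤ f x + ε := fun x hx => by
    rw [abs_sub_comm] at ha hb
    obtain ⟨y, hy, hxy⟩ := exists_mem_Icc_abs_sub_lt hab' ha hb hx
    exact ⟨y, hy, by linarith [(abs_le.1 (hfg x hx y hy (by rwa [abs_sub_comm]))).1]⟩
  have h₁ := csInf_image_le_csInf_image_add (isCompact_Icc.bddBelow_image hf)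
    (nonempty_Icc.2 hab') hfg'
  have h₂ := csInf_image_le_csInf_image_add (isCompact_Icc.bddBelow_image hg)
    (nonempty_Icc.2 hab) hgf
  exact abs_sub_le_iff.2 ⟨by linarith, by linarith⟩

lemma TendstoUniformlyOn.exists_eventually_dist_lt {ι α β : Type*} [PseudoMetricSpace α]
    [PseudoMetricSpace β] {p : Filter ι} {F : ι → α → β} {f : α → β} {K : Set α}
    (hF : TendstoUniformlyOn F f p K) (hK : IsCompact K) (hf : ContinuousOn f K) {ε : ℝ}
    (hε : 0 < ε) :
    ∃ δ > 0, ∀ᶠ n in p, ∀ x ∈ K, ∀ y ∈ K, dist x y < δ → dist (F n x) (f y) < ε := by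
  obtain ⟨δ, hδ, hmod⟩ := Metric.uniformContinuousOn_iff.1
    (hK.uniformContinuousOn_of_continuous hf) (ε / 2) (half_pos hε)
  refine ⟨δ, hδ, ?_⟩
  filter_upwards [Metric.tendstoUniformlyOn_iff.1 hF (ε / 2) (half_pos hε)] with n hn x hx y hy hxy
  calc dist (F n x) (f y) ≤ dist (F n x) (f x) + dist (f x) (f y) := dist_triangle _ _ _
    _ < ε / 2 + ε / 2 := by gcongr; exacts [dist_comm (f x) (F n x) ▸ hn x hx, hmod x hx y hy hxy]
    _ = ε := add_halves ε

lemma MonotoneOn.leftLim_eq_sSup {f : ℝ → ℝ} {a b s : ℝ} (hf : MonotoneOn f (Icc a b))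
    (hs : s ∈ Ioc a b) : Function.leftLim f s = sSup (f '' Ioo a s) := by
  have hsub : Ioo a s ⊆ Icc a b := Ioo_subset_Icc_self.trans (Icc_subset_Icc le_rfl hs.2)
  refine leftLim_eq_of_tendsto (MonotoneOn.tendsto_nhdsWithin_Ioo_left
    (nonempty_Ioo.2 hs.1) (hf.mono hsub) ⟨f s, ?_⟩)
  rintro _ ⟨u, hu, rfl⟩
  exact hf (hsub hu) ⟨hs.1.le, hs.2⟩ hu.2.le

lemma MonotoneOn.exists_apply_mem_Icc_of_jump_le {f : ℝ → ℝ} {a b r δ : ℝ}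
    (hab : a ≤ b) (hf : MonotoneOn f (Icc a b))
    (hrc : ∀ u ∈ Ico a b, ContinuousWithinAt f (Ici u) u)
    (hδ : 0 ≤ δ) (hjump : ∀ u ∈ Ioc a b, f u - Function.leftLim f u ≤ δ)
    (hr : r ∈ Icc (f a) (f b)) : ∃ s ∈ Icc a b, f s ∈ Icc r (r + δ) := by
  -- `s` is the first time `f` reaches `r`: right-continuity gives `r ≤ f s`, and `f < r` just
  -- before `s`, so the jump bound gives `f s ≤ r + δ`.
  set E := {u ∈ Icc a b | r ≤ f u}
  have hbE : b ∈ E := ⟨right_mem_Icc.2 hab, hr.2⟩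
  have hEbdd : BddBelow E := ⟨a, fun u hu => hu.1.1⟩
  set s := sInf E
  have hs : s ∈ Icc a b := ⟨le_csInf ⟨b, hbE⟩ fun u hu => hu.1.1, csInf_le hEbdd hbE⟩
  refine ⟨s, hs, ?_, ?_⟩
  · rcases hs.2.eq_or_lt with hsb | hsb
    · exact hsb ▸ hr.2
    refine ge_of_tendsto ((hrc s ⟨hs.1, hsb⟩).mono_left (nhdsWithin_mono _ Ioi_subset_Ici_self)) ?_
    filter_upwards [Ioc_mem_nhdsGT hsb] with v hv
    obtain ⟨u, huE, huv⟩ := exists_lt_of_csInf_lt ⟨b, hbE⟩ hv.1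
    exact huE.2.trans (hf huE.1 ⟨huE.1.1.trans huv.le, hv.2⟩ huv.le)
  · rcases hs.1.eq_or_lt with has | has
    · rw [← has]; linarith [hr.1]
    have hleft : Function.leftLim f s ≤ r := by
      rw [hf.leftLim_eq_sSup ⟨has, hs.2⟩]
      refine csSup_le ((nonempty_Ioo.2 has).image f) ?_
      rintro _ ⟨u, hu, rfl⟩
      by_contra! hru
      exact (csInf_le hEbdd ⟨⟨hu.1.le, hu.2.le.trans hs.2⟩, hru.le⟩).not_gt hu.2
    linarith [hjump s ⟨has, hs.2⟩]

lemma abs_sInf_image_comp_sub_sInf_image_Icc_le {τ g : ℝ → ℝ} {a b δ ε : ℝ} (hab : a ≤ b)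
    (hτ : MonotoneOn τ (Icc a b)) (hrc : ∀ u ∈ Ico a b, ContinuousWithinAt τ (Ici u) u)
    (hδ : 0 ≤ δ) (hjump : ∀ u ∈ Ioc a b, τ u - Function.leftLim τ u ≤ δ)
    (hg : ContinuousOn g (Icc (τ a) (τ b)))
    (hmod : ∀ x ∈ Icc (τ a) (τ b), ∀ y ∈ Icc (τ a) (τ b), |x - y| ≤ δ → |g x - g y| ≤ ε) :
    |sInf ((fun s => g (τ s)) '' Icc a b) - sInf (g '' Icc (τ a) (τ b))| ≤ ε := by
  have hτab : τ a ≤ τ b := hτ (left_mem_Icc.2 hab) (right_mem_Icc.2 hab) hab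
  have hmaps : τ '' Icc a b ⊆ Icc (τ a) (τ b) := by
    rintro _ ⟨s, hs, rfl⟩
    exact ⟨hτ (left_mem_Icc.2 hab) hs hs.1, hτ hs (right_mem_Icc.2 hab) hs.2⟩
  have hbdd := isCompact_Icc.bddBelow_image hg
  rw [← image_image]
  have h₁ : sInf (g '' Icc (τ a) (τ b)) ≤ sInf (g '' (τ '' Icc a b)) :=
    csInf_le_csInf hbdd (((nonempty_Icc.2 hab).image τ).image g) (image_mono hmaps)
  have h₂ : sInf (g '' (τ '' Icc a b)) ≤ sInf (g '' Icc (τ a) (τ b)) + ε := by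
    refine csInf_image_le_csInf_image_add (hbdd.mono (image_mono hmaps)) (nonempty_Icc.2 hτab)
      fun r hr => ?_
    obtain ⟨s, hs, hτs⟩ := hτ.exists_apply_mem_Icc_of_jump_le hab hrc hδ hjump hr
    refine ⟨τ s, mem_image_of_mem τ hs, ?_⟩
    have hsr : |τ s - r| ≤ δ := abs_le.2 ⟨by linarith [hτs.1], by linarith [hτs.2]⟩
    linarith [(abs_le.1 (hmod (τ s) (hmaps (mem_image_of_mem τ hs)) r hr hsr)).2]
  exact abs_sub_le_iff.2 ⟨by linarith, by linarith⟩

lemma eventually_abs_sInf_comp_sub_sInf_image_Icc_lt {ι : Type*} {p : Filter ι}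
    {τn φn : ι → ℝ → ℝ} {φ : ℝ → ℝ} {a b : ℝ} {K : Set ℝ}
    (hτn_mono : ∀ n, MonotoneOn (τn n) (Icc a b))
    (hτn_rc : ∀ n, ∀ t ∈ Ico a b, ContinuousWithinAt (τn n) (Ici t) t)
    (hjump : ∀ ε > 0, ∀ᶠ n in p, ∀ t ∈ Ioc a b, τn n t - Function.leftLim (τn n) t ≤ ε)
    (hK : IsCompact K) (hτnK : ∀ᶠ n in p, Icc (τn n a) (τn n b) ⊆ K)
    (hφn : ∀ n, Continuous (φn n)) (hφ : ContinuousOn φ K) (hφn_unif : TendstoUniformlyOn φn φ p K)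
    {ε : ℝ} (hε : 0 < ε) :
    ∀ᶠ n in p, ∀ t ∈ Icc a b, |sInf ((fun s => φn n (τn n s)) '' Icc a t)
      - sInf (φn n '' Icc (τn n a) (max (τn n a) (τn n t)))| < ε := by
  obtain ⟨δ, hδ, hmod⟩ := hφn_unif.exists_eventually_dist_lt hK hφ (by positivity : 0 < ε / 4)
  filter_upwards [hmod, hjump (δ / 2) (half_pos hδ), hτnK] with n hmod hjump hτnK t ht
  have hsub : Icc a t ⊆ Icc a b := Icc_subset_Icc le_rfl ht.2
  have hIK : Icc (τn n a) (τn n t) ⊆ K :=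
    (Icc_subset_Icc le_rfl (hτn_mono n ht (right_mem_Icc.2 (ht.1.trans ht.2)) ht.2)).trans hτnK
  rw [max_eq_right (hτn_mono n (left_mem_Icc.2 (ht.1.trans ht.2)) ht ht.1)]
  refine lt_of_le_of_lt (abs_sInf_image_comp_sub_sInf_image_Icc_le ht.1 ((hτn_mono n).mono hsub)
    (fun u hu => hτn_rc n u ⟨hu.1, hu.2.trans_le ht.2⟩) (half_pos hδ).le
    (fun u hu => hjump u ⟨hu.1, hu.2.trans ht.2⟩) (hφn n).continuousOn (ε := ε / 2)
    fun x hx y hy hxy => ?_) (half_lt_self hε)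
  have hxy' : dist x y < δ := by rw [Real.dist_eq]; linarith
  have h₁ := hmod x (hIK hx) x (hIK hx) (by simpa using hδ)
  have h₂ := hmod y (hIK hy) x (hIK hx) (by rwa [dist_comm])
  rw [← Real.dist_eq]
  calc dist (φn n x) (φn n y) ≤ dist (φn n x) (φ x) + dist (φn n y) (φ x) :=
        dist_triangle_right _ _ _
    _ ≤ ε / 2 := by linarith

lemma tendstoUniformlyOn_sInf_image_Icc_max {ι : Type*} {p : Filter ι} {an : ι → ℝ} {a : ℝ}
    {φn : ι → ℝ → ℝ} {φ : ℝ → ℝ} (ha : Tendsto an p (𝓝 a)) (hφn : ∀ n, Continuous (φn n))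
    (hφ : Continuous φ) (hφn_unif : ∀ K, IsCompact K → TendstoUniformlyOn φn φ p K)
    {Kc : Set ℝ} (hKc : IsCompact Kc) :
    TendstoUniformlyOn (fun n s => sInf (φn n '' Icc (an n) (max (an n) s)))
      (fun s => sInf (φ '' Icc a (max a s))) p Kc := by
  rw [Metric.tendstoUniformlyOn_iff]
  intro ε hε
  obtain ⟨M, hM⟩ := hKc.bddAbove
  set K := Icc (a - 1) (max (a + 1) M)
  obtain ⟨δ, hδ, hmod⟩ := (hφn_unif K isCompact_Icc).exists_eventually_dist_lt isCompact_Icc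
    hφ.continuousOn (half_pos hε)
  filter_upwards [hmod, Metric.tendsto_nhds.1 ha (min δ 1) (by positivity)] with n hmod han s hs
  rw [Real.dist_eq] at han
  have h₁ : |an n - a| < δ := han.trans_le (min_le_left _ _)
  have h₂ : |an n - a| < 1 := han.trans_le (min_le_right _ _)
  have hmax : |max (an n) s - max a s| < δ := (abs_max_sub_max_le_abs _ _ _).trans_lt h₁
  have hsM : s ≤ M := hM hs
  have hIn : Icc (an n) (max (an n) s) ⊆ K := Icc_subset_Icc (by linarith [(abs_lt.1 h₂).1])
    (max_le_max (by linarith [(abs_lt.1 h₂).2]) hsM)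
  have hI : Icc a (max a s) ⊆ K := Icc_subset_Icc (by linarith) (max_le_max (by linarith) hsM)
  rw [dist_comm, Real.dist_eq]
  refine lt_of_le_of_lt (abs_sInf_image_Icc_sub_sInf_image_Icc_le (le_max_left _ _)
    (le_max_left _ _) (hφn n).continuousOn hφ.continuousOn h₁ hmax
    fun x hx y hy hxy => ?_) (half_lt_self hε)
  have := hmod x (hIn hx) y (hI hy) (by rwa [Real.dist_eq])
  rw [Real.dist_eq] at this
  exact this.le

lemma continuous_sInf_image_Icc_max {φ : ℝ → ℝ} (hφ : Continuous φ) (a : ℝ) :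
    Continuous fun s => sInf (φ '' Icc a (max a s)) := by
  -- Parametrizing the interval by `[0, 1]` fixes the compact set the infimum runs over.
  have hseg : ∀ s, φ '' Icc a (max a s) =
      (fun θ => φ (AffineMap.lineMap a (max a s) θ)) '' Icc (0 : ℝ) 1 := fun s => by
    rw [← image_image φ (AffineMap.lineMap a (max a s)), ← segment_eq_image_lineMap,
      segment_eq_Icc (le_max_left _ _)]
  simp_rw [hseg]
  exact isCompact_Icc.continuous_sInf (by fun_prop)

lemma exists_mem_inter_Icc_left {α : Type*} [LinearOrder α] [TopologicalSpace α] [OrderTopology α]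
    [DenselyOrdered α] {S U : Set α} {a b t : α} (hS : Icc a b ⊆ closure S) (ha : a ∈ S)
    (ht : t ∈ Icc a b) (hU : U ∈ 𝓝[Icc a b] t) : ∃ u ∈ S ∩ U, u ∈ Icc a t := by
  rcases ht.1.eq_or_lt with rfl | hat
  · exact ⟨a, ⟨ha, mem_of_mem_nhdsWithin ht hU⟩, left_mem_Icc.2 le_rfl⟩
  have hsub : Icc a t ⊆ Icc a b := Icc_subset_Icc le_rfl ht.2
  have hUt : U ∩ Icc a t ∈ 𝓝[≤] t :=
    inter_mem (nhdsWithin_le_of_mem (mem_of_superset (Icc_mem_nhdsLE hat) hsub) hU)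
      (Icc_mem_nhdsLE hat)
  obtain ⟨c, hct, hc⟩ := (mem_nhdsLE_iff_exists_Ioc_subset' hat).1 hUt
  obtain ⟨m, hm⟩ := exists_between hct
  obtain ⟨u, hu, huS⟩ := mem_closure_iff.1 (hS (hsub (hc ⟨hm.1, hm.2.le⟩).2)) _ isOpen_Ioo hm
  have huU := hc (Ioo_subset_Ioc_self hu)
  exact ⟨u, ⟨huS, huU.1⟩, huU.2⟩

lemma exists_mem_inter_Icc_right {α : Type*} [LinearOrder α] [TopologicalSpace α] [OrderTopology α]
    [DenselyOrdered α] {S U : Set α} {a b t : α} (hS : Icc a b ⊆ closure S) (hb : b ∈ S)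
    (ht : t ∈ Icc a b) (hU : U ∈ 𝓝[Icc a b] t) : ∃ v ∈ S ∩ U, v ∈ Icc t b := by
  obtain ⟨v, hv, htv⟩ := exists_mem_inter_Icc_left (α := αᵒᵈ) (S := S) (U := U)
    (a := OrderDual.toDual b) (b := OrderDual.toDual a) (t := OrderDual.toDual t)
    (by rw [Icc_toDual]; exact hS) hb ⟨ht.2, ht.1⟩ (by rw [Icc_toDual]; exact hU)
  exact ⟨v, hv, htv.2, htv.1⟩

lemma tendsto_apply_of_monotoneOn_of_continuousWithinAt {ι : Type*} {p : Filter ι}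
    {F : ι → ℝ → ℝ} {f : ℝ → ℝ} {S : Set ℝ} {a b t : ℝ}
    (hF : ∀ n, MonotoneOn (F n) (Icc a b)) (hS : Icc a b ⊆ closure S) (ha : a ∈ S) (hb : b ∈ S)
    (hconv : ∀ s ∈ S, Tendsto (fun n => F n s) p (𝓝 (f s))) (ht : t ∈ Icc a b)
    (hft : ContinuousWithinAt f (Icc a b) t) : Tendsto (fun n => F n t) p (𝓝 (f t)) := by
  refine tendsto_order.2 ⟨fun l hl => ?_, fun m hm => ?_⟩
  · obtain ⟨u, ⟨huS, hlu⟩, hu⟩ := exists_mem_inter_Icc_left hS ha ht (hft (Ioi_mem_nhds hl))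
    filter_upwards [(hconv u huS).eventually (Ioi_mem_nhds hlu)] with n hn
    exact lt_of_lt_of_le hn (hF n ⟨hu.1, hu.2.trans ht.2⟩ ht hu.2)
  · obtain ⟨v, ⟨hvS, hvm⟩, hv⟩ := exists_mem_inter_Icc_right hS hb ht (hft (Iio_mem_nhds hm))
    filter_upwards [(hconv v hvS).eventually (Iio_mem_nhds hvm)] with n hn
    exact lt_of_le_of_lt (hF n ht ⟨ht.1.trans hv.1, hv.2⟩ hv.1) hn

theorem stmt2_general
    (T : ℝ)
    (τn : ℕ → ℝ → ℝ) (τ : ℝ → ℝ)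
    (hτn_mono : ∀ n, MonotoneOn (τn n) (Icc 0 T))
    (hτn_rc : ∀ n, ∀ t ∈ Ico (0:ℝ) T, ContinuousWithinAt (τn n) (Ici t) t)
    (S : Set ℝ) (hS_dense : Icc (0:ℝ) T ⊆ closure S)
    (hS0 : (0:ℝ) ∈ S) (hST : T ∈ S)
    (hconv : ∀ t ∈ S, Tendsto (fun n => τn n t) atTop (nhds (τ t)))
    (hjump : ∀ ε > (0:ℝ), ∀ᶠ n in atTop, ∀ t ∈ Ioc (0:ℝ) T,
      τn n t - Function.leftLim (τn n) t ≤ ε)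
    (φn : ℕ → ℝ → ℝ) (φ : ℝ → ℝ)
    (hφn_cont : ∀ n, Continuous (φn n)) (hφ_cont : Continuous φ)
    (hφ_unif : ∀ Kc : Set ℝ, IsCompact Kc → TendstoUniformlyOn φn φ atTop Kc) :
    (∀ ε > (0:ℝ), ∀ᶠ n in atTop, ∀ t ∈ Icc (0:ℝ) T,
      |sInf ((fun s => φn n (τn n s)) '' Icc 0 t)
        - sInf (φn n '' Icc (τn n 0) (max (τn n 0) (τn n t)))| < ε) ∧
    (∀ Kc : Set ℝ, IsCompact Kc →
      TendstoUniformlyOn (fun n s => sInf (φn n '' Icc (τn n 0) (max (τn n 0) s)))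
        (fun s => sInf (φ '' Icc (τ 0) (max (τ 0) s))) atTop Kc) ∧
    (∀ t ∈ Icc (0:ℝ) T, (ContinuousWithinAt τ (Icc 0 T) t ∨ t = T) →
      Tendsto (fun n => sInf ((fun s => φn n (τn n s)) '' Icc 0 t)) atTop
        (nhds (sInf (φ '' Icc (τ 0) (max (τ 0) (τ t)))))) := by
  have hτnK : ∀ᶠ n in atTop, Icc (τn n 0) (τn n T) ⊆ Icc (τ 0 - 1) (τ T + 1) := by
    filter_upwards [(hconv 0 hS0).eventually (Ioi_mem_nhds (sub_one_lt (τ 0))),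
      (hconv T hST).eventually (Iio_mem_nhds (lt_add_one (τ T)))] with n h₀ h_T
    exact Icc_subset_Icc (le_of_lt h₀) (le_of_lt h_T)
  have hX := fun ε (hε : 0 < ε) => eventually_abs_sInf_comp_sub_sInf_image_Icc_lt hτn_mono
    hτn_rc hjump isCompact_Icc hτnK hφn_cont hφ_cont.continuousOn (hφ_unif _ isCompact_Icc) hε
  have hΦ := fun Kc (hKc : IsCompact Kc) =>
    tendstoUniformlyOn_sInf_image_Icc_max (hconv 0 hS0) hφn_cont hφ_cont hφ_unif hKc
  refine ⟨hX, hΦ, fun t ht hτ_cont => ?_⟩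
  have hτt : Tendsto (fun n => τn n t) atTop (𝓝 (τ t)) := by
    rcases hτ_cont with hτ_cont | rfl
    · exact tendsto_apply_of_monotoneOn_of_continuousWithinAt hτn_mono hS_dense hS0 hST hconv
        ht hτ_cont
    · exact hconv t hST
  have hdiff : Tendsto (fun n => sInf ((fun s => φn n (τn n s)) '' Icc 0 t)
      - sInf (φn n '' Icc (τn n 0) (max (τn n 0) (τn n t)))) atTop (𝓝 0) :=
    Metric.tendsto_nhds.2 fun ε hε => (hX ε hε).mono fun n hn => by
      simpa only [Real.dist_eq, sub_zero] using hn t ht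
  have hcomp := (tendstoLocallyUniformly_iff_forall_isCompact.2 hΦ).tendsto_comp
    (continuous_sInf_image_Icc_max hφ_cont (τ 0)).continuousAt hτt
  simpa only [sub_add_cancel, zero_add] using hdiff.add hcomp

/-- Running infima of time-changed paths: the running infimum of `xⁿ = φⁿ ∘ τⁿ`
agrees up to a uniformly vanishing error with `φ̲ⁿ ∘ τⁿ`, where `φ̲ⁿ` is the running
infimum of `φⁿ` from `τⁿ(0)`, the `φ̲ⁿ` converge uniformly on compacts to `φ̲`, and the
running infimum converges pointwise to `φ̲ ∘ τ` at continuity points of `τ` and at `T`. -/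
theorem stmt2
    (T : ℝ) (hT : 0 < T)
    (τn : ℕ → ℝ → ℝ) (τ : ℝ → ℝ)
    (hτn_mono : ∀ n, MonotoneOn (τn n) (Icc 0 T))
    (hτn_nonneg : ∀ n, ∀ t ∈ Icc (0:ℝ) T, 0 ≤ τn n t)
    (hτn_rc : ∀ n, ∀ t ∈ Ico (0:ℝ) T, ContinuousWithinAt (τn n) (Ici t) t)
    (hτ_mono : MonotoneOn τ (Icc 0 T))
    (hτ_nonneg : ∀ t ∈ Icc (0:ℝ) T, 0 ≤ τ t)
    (hτ_rc : ∀ t ∈ Ico (0:ℝ) T, ContinuousWithinAt τ (Ici t) t)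
    (S : Set ℝ) (hS_sub : S ⊆ Icc 0 T) (hS_dense : Icc (0:ℝ) T ⊆ closure S)
    (hS0 : (0:ℝ) ∈ S) (hST : T ∈ S)
    (hconv : ∀ t ∈ S, Tendsto (fun n => τn n t) atTop (nhds (τ t)))
    (hjump : ∀ ε > (0:ℝ), ∀ᶠ n in atTop, ∀ t ∈ Ioc (0:ℝ) T,
      τn n t - Function.leftLim (τn n) t ≤ ε)
    (φn : ℕ → ℝ → ℝ) (φ : ℝ → ℝ)
    (hφn_cont : ∀ n, Continuous (φn n)) (hφ_cont : Continuous φ)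
    (hφ_unif : ∀ Kc : Set ℝ, IsCompact Kc → TendstoUniformlyOn φn φ atTop Kc) :
    (∀ ε > (0:ℝ), ∀ᶠ n in atTop, ∀ t ∈ Icc (0:ℝ) T,
      |sInf ((fun s => φn n (τn n s)) '' Icc 0 t)
        - sInf (φn n '' Icc (τn n 0) (max (τn n 0) (τn n t)))| < ε) ∧
    (∀ Kc : Set ℝ, IsCompact Kc →
      TendstoUniformlyOn (fun n s => sInf (φn n '' Icc (τn n 0) (max (τn n 0) s)))
        (fun s => sInf (φ '' Icc (τ 0) (max (τ 0) s))) atTop Kc) ∧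
    (∀ t ∈ Icc (0:ℝ) T, (ContinuousWithinAt τ (Icc 0 T) t ∨ t = T) →
      Tendsto (fun n => sInf ((fun s => φn n (τn n s)) '' Icc 0 t)) atTop
        (nhds (sInf (φ '' Icc (τ 0) (max (τ 0) (τ t)))))) :=
  stmt2_general T τn τ hτn_mono hτn_rc S hS_dense hS0 hST hconv hjump φn φ hφn_cont hφ_cont hφ_unif
end

section
/- Define the decorated Skorokhod space 𝔇[0,T] as the set of pairs (x, I) where x : [0,T] → ℝ is càdlàg and I = (I_t)_{t∈[0,T]} is a family of nonempty compact subsets of ℝ such that x(t−), x(t) ∈ I_t for all t, d_H(I_s, {x(t)}) → 0 as s ↓ t, and d_H(I_s, {x(t−)}) → 0 as s ↑ t. Then for every (x, I) ∈ 𝔇[0,T], the graph Γ(I) = { (t,z) ∈ [0,T]×ℝ : z ∈ I_t } is a compact subset of [0,T]×ℝ. -/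
/-!
On each side of `t` the sets `I s` shrink, in Hausdorff distance, to a point of `I t`
(`x t` from the right, `x (t-)` from the left), so `t ↦ I t` is upper hemicontinuous on
`[0,T]`. The graph of a compact-valued upper hemicontinuous correspondence over a compact set is
compact: an ultrafilter on the graph has first coordinates converging to some `t`, and then,
by upper hemicontinuity, second coordinates converging to the compact set `I t`, hence to one of
its points.
-/

open Filter Set Topology Metric

theorem IsCompact.setOf_mem_of_upperHemicontinuousOn {α β : Type*} [TopologicalSpace α]
    [TopologicalSpace β] {f : α → Set β} {K : Set α} (hK : IsCompact K)
    (hf : UpperHemicontinuousOn f K) (hfK : ∀ a ∈ K, IsCompact (f a)) :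
    IsCompact {p : α × β | p.1 ∈ K ∧ p.2 ∈ f p.1} := by
  rw [isCompact_iff_ultrafilter_le_nhds']
  intro 𝒰 hG
  have hK𝒰 : ∀ᶠ p in (𝒰 : Filter (α × β)), p.1 ∈ K := mem_of_superset hG fun _ hp ↦ hp.1
  obtain ⟨a, haK, ha⟩ := hK.ultrafilter_le_nhds' (𝒰.map Prod.fst) (mem_map.2 hK𝒰)
  have hfst : Tendsto Prod.fst (𝒰 : Filter (α × β)) (𝓝[K] a) :=
    tendsto_nhdsWithin_iff.2 ⟨ha, hK𝒰⟩
  have hsnd : Tendsto Prod.snd (𝒰 : Filter (α × β)) (𝓝ˢ (f a)) := fun u hu ↦ mem_map.2 <| by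
    filter_upwards [hfst.eventually (hf a haK u hu), hG] with p hpu hp
    exact subset_of_mem_nhdsSet hpu hp.2
  obtain ⟨b, hb, hbU⟩ : ∃ b ∈ f a, ClusterPt b (𝒰.map Prod.snd : Filter β) := by
    simp_rw [clusterPt_iff_not_disjoint]
    by_contra! h
    exact (𝒰.map Prod.snd).neBot.ne <| disjoint_self.1 <|
      ((hfK a haK).disjoint_nhdsSet_left.2 h).mono_left hsnd
  refine ⟨(a, b), ⟨haK, hb⟩, ?_⟩
  rw [nhds_prod_eq]
  exact le_prod.2 ⟨ha, Ultrafilter.clusterPt_iff.1 hbU⟩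

theorem Filter.Tendsto.eventually_subset_of_hausdorffDist_singleton {α β : Type*}
    [PseudoMetricSpace β] {I : α → Set β} {l : Filter α} {c : β} {u : Set β}
    (hI : Tendsto (fun s ↦ hausdorffDist (I s) {c}) l (𝓝 0))
    (hb : ∀ᶠ s in l, Bornology.IsBounded (I s)) (hu : u ∈ 𝓝 c) :
    ∀ᶠ s in l, I s ⊆ u := by
  obtain ⟨ε, hε, hball⟩ := Metric.mem_nhds_iff.1 hu
  filter_upwards [hI.eventually (gt_mem_nhds hε), hb] with s hs hbs y hy
  have hfin : hausdorffEDist (I s) {c} ≠ ⊤ :=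
    hausdorffEDist_ne_top_of_nonempty_of_bounded ⟨y, hy⟩ (singleton_nonempty c) hbs
      Bornology.isBounded_singleton
  have hdist : dist y c ≤ hausdorffDist (I s) {c} := by
    simpa only [infDist_singleton] using infDist_le_hausdorffDist_of_mem hy hfin
  exact hball (mem_ball.2 (hdist.trans_lt hs))

theorem eventually_nhdsWithin_of_eventually_Iio_inter_of_eventually_Ioi_inter {α : Type*}
    [LinearOrder α] [TopologicalSpace α] {p : α → Prop} {K : Set α} {t : α} (ht : p t)
    (hlt : ∀ᶠ s in 𝓝[Iio t ∩ K] t, p s) (hgt : ∀ᶠ s in 𝓝[Ioi t ∩ K] t, p s) :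
    ∀ᶠ s in 𝓝[K] t, p s := by
  have hK : K ⊆ insert t ((Iio t ∩ K) ∪ (Ioi t ∩ K)) := fun s hs ↦ by
    rcases lt_trichotomy s t with h | rfl | h
    exacts [Or.inr (Or.inl ⟨h, hs⟩), Or.inl rfl, Or.inr (Or.inr ⟨h, hs⟩)]
  refine Eventually.filter_mono (nhdsWithin_mono t hK) ?_
  rw [nhdsWithin_insert, nhdsWithin_union]
  exact eventually_sup.2 ⟨ht, eventually_sup.2 ⟨hlt, hgt⟩⟩

theorem stmt3_general
    (T : ℝ)
    (x xl : ℝ → ℝ)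
    (I : ℝ → Set ℝ)
    (hI_cpt : ∀ t ∈ Icc (0:ℝ) T, IsCompact (I t))
    (hmem_r : ∀ t ∈ Icc (0:ℝ) T, x t ∈ I t)
    (hmem_l : ∀ t ∈ Icc (0:ℝ) T, xl t ∈ I t)
    (hright : ∀ t ∈ Icc (0:ℝ) T,
      Tendsto (fun s => Metric.hausdorffDist (I s) {x t})
        (nhdsWithin t (Ioi t ∩ Icc 0 T)) (nhds 0))
    (hleft : ∀ t ∈ Icc (0:ℝ) T,
      Tendsto (fun s => Metric.hausdorffDist (I s) {xl t})
        (nhdsWithin t (Iio t ∩ Icc 0 T)) (nhds 0)) :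
    IsCompact {p : ℝ × ℝ | p.1 ∈ Icc (0:ℝ) T ∧ p.2 ∈ I p.1} := by
  have hbounded (S : Set ℝ) (t : ℝ) :
      ∀ᶠ s in 𝓝[S ∩ Icc 0 T] t, Bornology.IsBounded (I s) := by
    filter_upwards [self_mem_nhdsWithin] with s hs using (hI_cpt s hs.2).isBounded
  have hI : UpperHemicontinuousOn I (Icc 0 T) :=
    upperHemicontinuousOn_iff_forall_isOpen.2 fun t ht u hu htu ↦
      eventually_nhdsWithin_of_eventually_Iio_inter_of_eventually_Ioi_inter htu
        ((hleft t ht).eventually_subset_of_hausdorffDist_singleton (hbounded _ t)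
          (hu.mem_nhds (htu (hmem_l t ht))))
        ((hright t ht).eventually_subset_of_hausdorffDist_singleton (hbounded _ t)
          (hu.mem_nhds (htu (hmem_r t ht))))
  exact isCompact_Icc.setOf_mem_of_upperHemicontinuousOn hI hI_cpt

/-- For an element `(x, I)` of the decorated Skorokhod space `𝔇[0,T]`, the graph
`Γ(I) = {(t,z) : t ∈ [0,T], z ∈ I_t}` is compact. Here `xl` denotes the left-limit
function of the càdlàg path `x`, with the convention `xl 0 = x 0`. -/
theorem stmt3
    (T : ℝ) (hT : 0 < T)
    (x xl : ℝ → ℝ)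
    (hx_rc : ∀ t ∈ Ico (0:ℝ) T, ContinuousWithinAt x (Ici t) t)
    (hxl : ∀ t ∈ Ioc (0:ℝ) T, Tendsto x (nhdsWithin t (Iio t)) (nhds (xl t)))
    (hxl0 : xl 0 = x 0)
    (I : ℝ → Set ℝ)
    (hI_ne : ∀ t ∈ Icc (0:ℝ) T, (I t).Nonempty)
    (hI_cpt : ∀ t ∈ Icc (0:ℝ) T, IsCompact (I t))
    (hmem_r : ∀ t ∈ Icc (0:ℝ) T, x t ∈ I t)
    (hmem_l : ∀ t ∈ Icc (0:ℝ) T, xl t ∈ I t)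
    (hright : ∀ t ∈ Icc (0:ℝ) T,
      Tendsto (fun s => Metric.hausdorffDist (I s) {x t})
        (nhdsWithin t (Ioi t ∩ Icc 0 T)) (nhds 0))
    (hleft : ∀ t ∈ Icc (0:ℝ) T,
      Tendsto (fun s => Metric.hausdorffDist (I s) {xl t})
        (nhdsWithin t (Iio t ∩ Icc 0 T)) (nhds 0)) :
    IsCompact {p : ℝ × ℝ | p.1 ∈ Icc (0:ℝ) T ∧ p.2 ∈ I p.1} :=
  stmt3_general T x xl I hI_cpt hmem_r hmem_l hright hleft
end

section
/- Let K ∈ L¹_loc(ℝ₊, ℝ₊) be nonnegative, nonincreasing, and locally integrable, and let R ∈ L¹_loc(ℝ₊) be the resolvent of the second kind of K, i.e. the unique locally integrable function satisfying K ∗ R = R ∗ K = K − R, where ∗ denotes convolution on ℝ₊. Suppose additionally that R ≥ 0. Then ∫₀^∞ R(s) ds ≤ 1. -/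
/-!
Write `R̄ t = ∫₀ᵗ R` and `K̄ t = ∫₀ᵗ K`. Integrating `K ∗ R = K - R` gives `K̄ = R̄ + R ∗ K̄`.
As `K` is nonincreasing, `K̄` is concave: for `0 ≤ s ≤ t₀ ≤ t` its increment over `[t₀ - s, t - s]`
dominates the one over `[t₀, t]`, so `(R ∗ K̄)(t) ≥ (R ∗ K̄)(t₀) + R̄ t₀ (K̄ t - K̄ t₀)`.
Comparing the identity at `t₀` and `t` shows that `R̄` stops growing once `R̄ t₀ ≥ 1`; since `R̄`
is continuous with `R̄ 0 = 0`, it never exceeds `1`.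

All integrals are taken in `ℝ≥0∞`, so no integrability side conditions arise.
-/
open Set MeasureTheory ENNReal

namespace Volterra

noncomputable def prim (f : ℝ → ℝ≥0∞) (t : ℝ) : ℝ≥0∞ := ∫⁻ s in Ioc 0 t, f s

noncomputable def conv (f g : ℝ → ℝ≥0∞) (t : ℝ) : ℝ≥0∞ := ∫⁻ s in Ioc 0 t, f (t - s) * g s

lemma prim_mono (f : ℝ → ℝ≥0∞) : Monotone (prim f) := fun _ _ h =>
  lintegral_mono_set (Ioc_subset_Ioc_right h)

lemma prim_of_nonpos (f : ℝ → ℝ≥0∞) {t : ℝ} (ht : t ≤ 0) : prim f t = 0 := by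
  simp [prim, Ioc_eq_empty_of_le ht]

lemma prim_eq_add (f : ℝ → ℝ≥0∞) {a b : ℝ} (ha : 0 ≤ a) (hab : a ≤ b) :
    prim f b = prim f a + ∫⁻ s in Ioc a b, f s := by
  rw [prim, prim, ← lintegral_union measurableSet_Ioc (Ioc_disjoint_Ioc_of_le le_rfl),
    Ioc_union_Ioc_eq_Ioc ha hab]

lemma setLIntegral_Ioc_comp_sub (f : ℝ → ℝ≥0∞) (a b c : ℝ) :
    ∫⁻ u in Ioc a b, f (u - c) = ∫⁻ v in Ioc (a - c) (b - c), f v := by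
  have := (measurePreserving_sub_right volume c).setLIntegral_comp_preimage_emb
    (measurableEmbedding_subRight c) f (Ioc (a - c) (b - c))
  rwa [preimage_sub_const_Ioc, sub_add_cancel, sub_add_cancel] at this

lemma setLIntegral_Ioc_le_of_antitone {κ : ℝ → ℝ≥0∞} (hκ : Antitone κ) (a b : ℝ) {c : ℝ}
    (hc : 0 ≤ c) : ∫⁻ s in Ioc a b, κ s ≤ ∫⁻ s in Ioc (a - c) (b - c), κ s := by
  rw [← setLIntegral_Ioc_comp_sub]
  exact lintegral_mono fun s => hκ (by linarith)

lemma conv_le_mul_prim {F g : ℝ → ℝ≥0∞} (hF : Monotone F) (hg : Measurable g) (t : ℝ) :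
    conv F g t ≤ F t * prim g t := by
  rw [prim, ← lintegral_const_mul _ hg]
  exact setLIntegral_mono (hg.const_mul _) fun s hs => by gcongr; exact hF (by linarith [hs.1])

lemma measurable_conv {f g : ℝ → ℝ≥0∞} (hf : Measurable f) (hg : Measurable g) :
    Measurable (conv f g) := by
  have hprod : Measurable
      (Function.uncurry fun u s => (Ioc 0 u).indicator (fun s => f (u - s) * g s) s) :=
    Measurable.ite ((measurableSet_lt measurable_const measurable_snd).inter
      (measurableSet_le measurable_snd measurable_fst))
      ((hf.comp (measurable_fst.sub measurable_snd)).mul (hg.comp measurable_snd))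
      measurable_const
  convert hprod.lintegral_prod_right (ν := volume) using 2 with u
  rw [conv, lintegral_indicator measurableSet_Ioc]

lemma lintegral_conv {f g : ℝ → ℝ≥0∞} (hf : Measurable f) (hg : Measurable g) (t : ℝ) :
    ∫⁻ u in Ioc 0 t, conv f g u = conv (prim f) g t := by
  let h : ℝ → ℝ → ℝ≥0∞ := fun u s => if s < u then f (u - s) * g s else 0
  have hm : Measurable (Function.uncurry h) :=
    Measurable.ite (measurableSet_lt measurable_snd measurable_fst)
      ((hf.comp (measurable_fst.sub measurable_snd)).mul (hg.comp measurable_snd))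
      measurable_const
  have inner : ∀ u ∈ Ioc 0 t, conv f g u = ∫⁻ s in Ioc 0 t, h u s := by
    intro u hu
    change _ = ∫⁻ s in Ioc 0 t, (Iio u).indicator (fun s => f (u - s) * g s) s
    have hset : Iio u ∩ Ioc 0 t = Ioo 0 u := by
      ext s; simp only [mem_inter_iff, mem_Iio, mem_Ioc, mem_Ioo]
      constructor
      · rintro ⟨hsu, hs0, -⟩; exact ⟨hs0, hsu⟩
      · rintro ⟨hs0, hsu⟩; exact ⟨hsu, hs0, hsu.le.trans hu.2⟩
    rw [setLIntegral_indicator measurableSet_Iio, hset, conv]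
    exact setLIntegral_congr Ioo_ae_eq_Ioc.symm
  have outer : ∀ s ∈ Ioc 0 t, ∫⁻ u in Ioc 0 t, h u s = prim f (t - s) * g s := by
    intro s hs
    have hfs : Measurable fun u => f (u - s) := hf.comp (measurable_sub_const s)
    change ∫⁻ u in Ioc 0 t, (Ioi s).indicator (fun u => f (u - s) * g s) u = _
    rw [setLIntegral_indicator measurableSet_Ioi, inter_comm, Ioc_inter_Ioi, max_eq_right hs.1.le,
      lintegral_mul_const _ hfs, setLIntegral_Ioc_comp_sub, sub_self, prim]
  calc ∫⁻ u in Ioc 0 t, conv f g u = ∫⁻ u in Ioc 0 t, ∫⁻ s in Ioc 0 t, h u s :=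
        setLIntegral_congr_fun measurableSet_Ioc inner
    _ = ∫⁻ s in Ioc 0 t, ∫⁻ u in Ioc 0 t, h u s := lintegral_lintegral_swap hm.aemeasurable
    _ = conv (prim f) g t := setLIntegral_congr_fun measurableSet_Ioc outer

lemma prim_eq_prim_add_conv {κ ρ : ℝ → ℝ≥0∞} (hκ : Measurable κ) (hρ : Measurable ρ) {t : ℝ}
    (h : ∀ᵐ u ∂volume.restrict (Ioc 0 t), κ u = ρ u + conv κ ρ u) :
    prim κ t = prim ρ t + conv (prim κ) ρ t := by
  rw [prim, lintegral_congr_ae h, lintegral_add_left hρ, lintegral_conv hκ hρ, prim]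

lemma prim_le_of_one_le_prim {κ ρ : ℝ → ℝ≥0∞} (hκ : Antitone κ) (hρ : Measurable ρ)
    (hid : ∀ t > 0, prim κ t = prim ρ t + conv (prim κ) ρ t) {t₀ t : ℝ} (ht₀ : 0 < t₀)
    (hρt₀ : 1 ≤ prim ρ t₀) (ht : t₀ ≤ t) (hfin : prim κ t ≠ ∞) : prim ρ t ≤ prim ρ t₀ := by
  set I := ∫⁻ s in Ioc t₀ t, κ s
  have hshift : ∀ s ∈ Ioc 0 t₀, prim κ (t₀ - s) + I ≤ prim κ (t - s) := by
    intro s hs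
    rw [prim_eq_add κ (sub_nonneg.2 hs.2) (by linarith : t₀ - s ≤ t - s)]
    gcongr
    exact setLIntegral_Ioc_le_of_antitone hκ t₀ t hs.1.le
  have hconv : conv (prim κ) ρ t₀ + I ≤ conv (prim κ) ρ t := calc
    conv (prim κ) ρ t₀ + I ≤ conv (prim κ) ρ t₀ + I * prim ρ t₀ := by
        gcongr; exact le_mul_of_one_le_right' hρt₀
    _ = ∫⁻ s in Ioc 0 t₀, (prim κ (t₀ - s) + I) * ρ s := by
        simp_rw [add_mul]
        rw [lintegral_add_right _ (hρ.const_mul I), lintegral_const_mul _ hρ, conv, prim]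
    _ ≤ ∫⁻ s in Ioc 0 t₀, prim κ (t - s) * ρ s :=
        setLIntegral_mono
          (((prim_mono κ).measurable.comp (measurable_const.sub measurable_id)).mul hρ)
          fun s hs => by gcongr; exact hshift s hs
    _ ≤ conv (prim κ) ρ t := lintegral_mono_set (Ioc_subset_Ioc_right ht)
  have hconv_fin : conv (prim κ) ρ t ≠ ∞ :=
    ne_top_of_le_ne_top hfin (by rw [hid t (ht₀.trans_le ht)]; exact le_add_self)
  refine (ENNReal.add_le_add_iff_right hconv_fin).1 ?_
  calc prim ρ t + conv (prim κ) ρ t = prim κ t₀ + I := by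
        rw [← hid t (ht₀.trans_le ht), prim_eq_add κ ht₀.le ht]
    _ = prim ρ t₀ + (conv (prim κ) ρ t₀ + I) := by rw [hid t₀ ht₀, add_assoc]
    _ ≤ prim ρ t₀ + conv (prim κ) ρ t := by gcongr

lemma prim_le_one {κ ρ : ℝ → ℝ≥0∞} (hκ : Antitone κ) (hρ : Measurable ρ)
    (hid : ∀ t > 0, prim κ t = prim ρ t + conv (prim κ) ρ t) (hfin : ∀ t > 0, prim κ t ≠ ∞)
    (hcont : ∀ t > 0, ContinuousOn (prim ρ) (Icc 0 t)) (t : ℝ) : prim ρ t ≤ 1 := by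
  by_contra! h
  have ht : 0 < t := by
    by_contra! ht
    simp [prim_of_nonpos ρ ht] at h
  obtain ⟨t₀, ⟨-, ht₀t⟩, hρt₀⟩ :=
    intermediate_value_Icc ht.le (hcont t ht)
      (show (1 : ℝ≥0∞) ∈ Icc (prim ρ 0) (prim ρ t) from ⟨by simp [prim_of_nonpos], h.le⟩)
  have ht₀ : 0 < t₀ := by
    by_contra! ht₀
    simp [prim_of_nonpos ρ ht₀] at hρt₀
  have := prim_le_of_one_le_prim hκ hρ hid ht₀ hρt₀.ge ht₀t (hfin t ht)
  exact (this.trans_eq hρt₀).not_gt h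

-- The value `∞` on `(-∞, 0]` makes the extension antitone on all of `ℝ`, hence measurable.
noncomputable def extendByTop (K : ℝ → ℝ) (s : ℝ) : ℝ≥0∞ :=
  if 0 < s then ENNReal.ofReal (K s) else ∞

lemma antitone_extendByTop {K : ℝ → ℝ} (hK : AntitoneOn K (Ioi 0)) :
    Antitone (extendByTop K) := by
  intro a b hab
  by_cases ha : 0 < a
  · rw [extendByTop, extendByTop, if_pos ha, if_pos (ha.trans_le hab)]
    exact ENNReal.ofReal_le_ofReal (hK ha (ha.trans_le hab) hab)
  · simp [extendByTop, ha]

lemma eq_add_conv_of_integral_eq {K R : ℝ → ℝ} {κ ρ : ℝ → ℝ≥0∞} (hκ : Measurable κ)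
    (hρ : Measurable ρ) (hext : ∀ s > 0, κ s = ENNReal.ofReal (K s)) (hK : ∀ s > 0, 0 ≤ K s)
    (hR : ∀ s > 0, 0 ≤ R s) {u : ℝ} (hu : 0 < u)
    (hρR : ∀ᵐ s ∂volume.restrict (Ioc 0 u), ρ s = ENNReal.ofReal (R s))
    (hρu : ρ u = ENNReal.ofReal (R u)) (hfin : conv κ ρ u ≠ ∞)
    (heq : ∫ s in (0:ℝ)..u, K (u - s) * R s = K u - R u) : κ u = ρ u + conv κ ρ u := by
  have hm : Measurable fun s => κ (u - s) * ρ s :=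
    (hκ.comp (measurable_const.sub measurable_id)).mul hρ
  have hconv : ∫ s in (0:ℝ)..u, K (u - s) * R s = (conv κ ρ u).toReal := by
    rw [intervalIntegral.integral_of_le hu.le, conv,
      ← integral_toReal hm.aemeasurable (ae_lt_top hm hfin)]
    refine integral_congr_ae ?_
    filter_upwards [hρR, ae_restrict_of_ae (Measure.ae_ne volume u),
      ae_restrict_mem measurableSet_Ioc] with s hρs hsu hs
    have hus : 0 < u - s := sub_pos.2 (hs.2.lt_of_ne hsu)
    rw [hρs, hext _ hus, ← ENNReal.ofReal_mul (hK _ hus),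
      ENNReal.toReal_ofReal (mul_nonneg (hK _ hus) (hR _ hs.1))]
  have hKu : K u = R u + (conv κ ρ u).toReal := by linarith
  rw [hext u hu, hKu, ENNReal.ofReal_add (hR u hu) toReal_nonneg, ofReal_toReal hfin, hρu]

lemma prim_eq_prim_add_conv_of_resolvent {K R : ℝ → ℝ} {κ ρ : ℝ → ℝ≥0∞} (hκ : Antitone κ)
    (hρ : Measurable ρ) (hext : ∀ s > 0, κ s = ENNReal.ofReal (K s)) (hK : ∀ s > 0, 0 ≤ K s)
    (hR : ∀ s > 0, 0 ≤ R s) (hρR : ∀ᵐ s ∂volume.restrict (Ioi 0), ρ s = ENNReal.ofReal (R s))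
    (hres : ∀ᵐ u ∂volume.restrict (Ioi 0), ∫ s in (0:ℝ)..u, K (u - s) * R s = K u - R u)
    {t : ℝ} (hκt : prim κ t ≠ ∞) (hρt : prim ρ t ≠ ∞) :
    prim κ t = prim ρ t + conv (prim κ) ρ t := by
  have hsub {p : ℝ → Prop} {u : ℝ} : (∀ᵐ s ∂volume.restrict (Ioi 0), p s) →
      ∀ᵐ s ∂volume.restrict (Ioc 0 u), p s :=
    ae_restrict_of_ae_restrict_of_subset Ioc_subset_Ioi_self
  have hfin : ∀ᵐ u ∂volume.restrict (Ioc 0 t), conv κ ρ u < ∞ := by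
    refine ae_lt_top (measurable_conv hκ.measurable hρ) ?_
    rw [lintegral_conv hκ.measurable hρ]
    exact ne_top_of_le_ne_top (mul_ne_top hκt hρt) (conv_le_mul_prim (prim_mono κ) hρ t)
  refine prim_eq_prim_add_conv hκ.measurable hρ ?_
  filter_upwards [hsub hres, hsub hρR, hfin, ae_restrict_mem measurableSet_Ioc]
    with u hresu hρu hfinu hu
  exact eq_add_conv_of_integral_eq hκ.measurable hρ hext hK hR hu.1 (hsub hρR) hρu hfinu.ne hresu

lemma continuousOn_prim_ofReal {R : ℝ → ℝ} {t : ℝ} (ht : 0 ≤ t) (hR : IntegrableOn R (Ioc 0 t))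
    (hR0 : ∀ s > 0, 0 ≤ R s) : ContinuousOn (prim fun s => ENNReal.ofReal (R s)) (Icc 0 t) := by
  have hRt : IntegrableOn R (uIcc 0 t) := by
    rwa [uIcc_of_le ht, integrableOn_Icc_iff_integrableOn_Ioc]
  have hcont := intervalIntegral.continuousOn_primitive_interval hRt
  rw [uIcc_of_le ht] at hcont
  refine (ENNReal.continuous_ofReal.comp_continuousOn hcont).congr fun x hx => ?_
  rw [Function.comp_apply, intervalIntegral.integral_of_le hx.1,
    ofReal_integral_eq_lintegral_ofReal (hR.mono_set (Ioc_subset_Ioc_right hx.2))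
      ((ae_restrict_iff' measurableSet_Ioc).2 (ae_of_all _ fun s hs => hR0 s hs.1)), prim]

end Volterra

open Volterra in
/-- If `K` is nonnegative, nonincreasing and locally integrable on `ℝ₊` and `R` is its
resolvent of the second kind (`K ∗ R = R ∗ K = K − R`) with `R ≥ 0`, then
`∫₀^∞ R(s) ds ≤ 1`. -/
theorem stmt6
    (K R : ℝ → ℝ)
    (hK_nonneg : ∀ t > (0:ℝ), 0 ≤ K t)
    (hK_anti : AntitoneOn K (Ioi 0))
    (hK_loc : ∀ t > (0:ℝ), IntegrableOn K (Ioc 0 t))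
    (hR_loc : ∀ t > (0:ℝ), IntegrableOn R (Ioc 0 t))
    (hR_nonneg : ∀ t > (0:ℝ), 0 ≤ R t)
    (hres : ∀ᵐ t ∂(volume.restrict (Ioi (0:ℝ))),
      (∫ s in (0:ℝ)..t, K (t - s) * R s) = K t - R t ∧
      (∫ s in (0:ℝ)..t, R (t - s) * K s) = K t - R t) :
    ∫⁻ s in Ioi (0:ℝ), ENNReal.ofReal (R s) ≤ 1 := by
  obtain ⟨ρ, hρ, hρR⟩ : ∃ ρ : ℝ → ℝ≥0∞, Measurable ρ ∧
      ∀ᵐ s ∂volume.restrict (Ioi 0), ρ s = ENNReal.ofReal (R s) := by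
    have hae := aemeasurable_Ioi_of_forall_Ioc fun t ht =>
      (hR_loc t ht).aemeasurable.ennreal_ofReal
    exact ⟨_, hae.measurable_mk, hae.ae_eq_mk.symm⟩
  have hprim : prim ρ = prim fun s => ENNReal.ofReal (R s) := funext fun t =>
    lintegral_congr_ae (ae_restrict_of_ae_restrict_of_subset Ioc_subset_Ioi_self hρR)
  have hext : ∀ s > 0, extendByTop K s = ENNReal.ofReal (K s) := fun s hs => if_pos hs
  have hκfin : ∀ t > 0, prim (extendByTop K) t ≠ ∞ := fun t ht => by
    rw [prim, setLIntegral_congr_fun measurableSet_Ioc fun s hs => hext s hs.1]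
    exact (hK_loc t ht).setLIntegral_lt_top.ne
  have hρfin : ∀ t > 0, prim ρ t ≠ ∞ := fun t ht => by
    rw [hprim]; exact (hR_loc t ht).setLIntegral_lt_top.ne
  have hle : ∀ t, prim ρ t ≤ 1 :=
    prim_le_one (antitone_extendByTop hK_anti) hρ
      (fun t ht => prim_eq_prim_add_conv_of_resolvent (antitone_extendByTop hK_anti) hρ hext
        hK_nonneg hR_nonneg hρR (hres.mono fun _ h => h.1) (hκfin t ht) (hρfin t ht))
      hκfin (fun t ht => hprim ▸ continuousOn_prim_ofReal ht.le (hR_loc t ht) hR_nonneg)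
  calc ∫⁻ s in Ioi (0:ℝ), ENNReal.ofReal (R s) = ⨆ n : ℕ, prim ρ n := by
        rw [hprim, ← iUnion_Ioc_eq_Ioi_self_iff.2 fun x _ => exists_nat_ge x,
          setLIntegral_iUnion_of_directed _ (Monotone.directed_le
            fun m n h => Ioc_subset_Ioc_right (Nat.cast_le.2 h))]
        rfl
    _ ≤ 1 := iSup_le fun n => hle n
end
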